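/- arXiv:1702.01617 — 4 statements merged into one kernel-verified Lean document; each statement's English description precedes it below -/
import Mathlib

section
/- Let d ∈ ℕ, let p be a prime, and let Λ be a finite subset of ℤ^d such that |Λ| < (p−1)/d and such that every nonzero m ∈ Λ has at least one coordinate not divisible by p. Then there exists a natural number a with 1 ≤ a < p such that for every m = (m₁, …, m_d) ∈ Λ with m ≠ 0 one has m₁ + a·m₂ + ⋯ + a^{d−1}·m_d ≢ 0 (mod p). -/
open MeasureTheory Real Finset

noncomputable section

/-- The cube `[0, 2π)^d` representing the torus `𝕋^d`. -/
def torusCube (d : ℕ) : Set (Fin d → ℝ) := Set.univ.pi fun _ => Set.Ico 0 (2 * π)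

/-- The trigonometric polynomial with frequencies in `Q` and coefficients `c`. -/
def trigSum {d : ℕ} (Q : Finset (Fin d → ℤ)) (c : (Fin d → ℤ) → ℂ) : (Fin d → ℝ) → ℂ :=
  fun x => ∑ k ∈ Q, c k * Complex.exp (Complex.I * ∑ j, (k j : ℂ) * (x j : ℂ))

/-- `‖f‖_q^q = (2π)^{-d} ∫_{𝕋^d} |f(x)|^q dx`. -/
def lqNormPow (d : ℕ) (q : ℝ) (f : (Fin d → ℝ) → ℂ) : ℝ :=
  ((2 * π) ^ d)⁻¹ * ∫ x in torusCube d, ‖f x‖ ^ q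

open Classical in
/-- The step hyperbolic cross `Q_n`. -/
def hyperCross (d n : ℕ) : Finset (Fin d → ℤ) :=
  (Fintype.piFinset fun _ : Fin d => Finset.Icc (-(2 ^ n : ℤ)) (2 ^ n)).filter
    fun k => ∃ s : Fin d → ℕ, (∑ j, s j) ≤ n ∧
      ∀ j, ((2 ^ s j / 2 : ℕ) : ℤ) ≤ |k j| ∧ |k j| < 2 ^ s j

/-- sup-norm over the torus. -/
def supNorm (d : ℕ) (f : (Fin d → ℝ) → ℂ) : ℝ := ⨆ x : Fin d → ℝ, ‖f x‖

/-- entropy number `ε_k(A, L_∞)` with centers in `A`. -/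
def entropyNum (d : ℕ) (A : Set ((Fin d → ℝ) → ℂ)) (k : ℕ) : ℝ :=
  sInf {ε : ℝ | ∃ y : Fin (2 ^ k) → ((Fin d → ℝ) → ℂ), (∀ j, y j ∈ A) ∧
    ∀ f ∈ A, ∃ j, ∀ x, ‖f x - y j x‖ ≤ ε}

/-- unit `L_q`-ball of `𝒯(Q_n)`. -/
def trigBall (d : ℕ) (Q : Finset (Fin d → ℤ)) (q : ℝ) : Set ((Fin d → ℝ) → ℂ) :=
  {f | ∃ c : (Fin d → ℤ) → ℂ, f = trigSum Q c ∧ (lqNormPow d q f) ^ (1 / q) ≤ 1}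

/-- the points `ξ^ν` built from `a` and `p`. -/
def xiPoint (d p a : ℕ) (ν : ℕ) : Fin d → ℝ :=
  fun j => 2 * π * Int.fract ((ν * a ^ (j : ℕ) : ℝ) / p)

/-- Dirichlet kernel of `Q`. -/
def dirKernel {d : ℕ} (Q : Finset (Fin d → ℤ)) : (Fin d → ℝ) → ℂ :=
  fun x => ∑ k ∈ Q, Complex.exp (Complex.I * ∑ j, (k j : ℂ) * (x j : ℂ))

theorem stmt8 (d : ℕ) (hd : 0 < d) (p : ℕ) (hp : p.Prime) (Λ : Finset (Fin d → ℤ))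
    (hcard : (Λ.card : ℝ) < ((p : ℝ) - 1) / d)
    (hcoord : ∀ mm ∈ Λ, mm ≠ 0 → ∃ j, ¬ (p : ℤ) ∣ mm j) :
    ∃ a : ℕ, 1 ≤ a ∧ a < p ∧
      ∀ mm ∈ Λ, mm ≠ 0 → ¬ ((p : ℤ) ∣ ∑ j, mm j * (a : ℤ) ^ (j : ℕ)) := by
  classical
  haveI : Fact p.Prime := ⟨hp⟩
  set F : (Fin d → ℤ) → Polynomial (ZMod p) :=
    fun mm => ∑ j : Fin d, Polynomial.C ((mm j : ZMod p)) * Polynomial.X ^ (j : ℕ) with hF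
  have hdeg : ∀ mm, (F mm).natDegree ≤ d - 1 := by
    intro mm
    apply Polynomial.natDegree_sum_le_of_forall_le
    intro i _
    exact le_trans (Polynomial.natDegree_C_mul_X_pow_le _ _) (Nat.le_pred_of_lt i.isLt)
  have hne : ∀ mm ∈ Λ, mm ≠ 0 → F mm ≠ 0 := by
    intro mm hmem hmm0
    obtain ⟨j, hj⟩ := hcoord mm hmem hmm0
    have hcoeff : (F mm).coeff (j : ℕ) = (mm j : ZMod p) := by
      simp only [hF, Polynomial.finset_sum_coeff, Polynomial.coeff_C_mul,
        Polynomial.coeff_X_pow]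
      rw [Finset.sum_eq_single j]
      · simp
      · intro i _ hij
        rw [if_neg (fun h => hij (Fin.val_injective h.symm)), mul_zero]
      · intro h; exact absurd (Finset.mem_univ j) h
    intro h0
    rw [h0, Polynomial.coeff_zero] at hcoeff
    exact hj ((ZMod.intCast_zmod_eq_zero_iff_dvd _ _).mp hcoeff.symm)
  set B : Finset (ZMod p) :=
    insert 0 (Λ.biUnion fun mm => (F mm).roots.toFinset) with hB
  have harith : Λ.card * d < p - 1 := by
    have hd' : (0:ℝ) < d := by exact_mod_cast hd
    have h2 : ((Λ.card * d : ℕ) : ℝ) < ((p - 1 : ℕ) : ℝ) := by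
      rw [Nat.cast_sub hp.one_le, Nat.cast_mul, Nat.cast_one]
      calc (Λ.card : ℝ) * d < ((p:ℝ) - 1) / d * d := by
            exact mul_lt_mul_of_pos_right hcard hd'
        _ = (p:ℝ) - 1 := div_mul_cancel₀ _ (ne_of_gt hd')
    exact_mod_cast h2
  have hcardB : B.card < p := by
    have h1 : (Λ.biUnion fun mm => (F mm).roots.toFinset).card ≤ Λ.card * (d - 1) := by
      refine le_trans Finset.card_biUnion_le ?_
      have h := Finset.sum_le_card_nsmul Λ (fun mm => ((F mm).roots.toFinset).card)
        (d - 1) (fun mm _ => le_trans (Multiset.toFinset_card_le _)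
          (le_trans (Polynomial.card_roots' _) (hdeg mm)))
      simpa [smul_eq_mul] using h
    have h2 : B.card ≤ Λ.card * (d - 1) + 1 :=
      le_trans (Finset.card_insert_le _ _) (by omega)
    have h3 : Λ.card * (d - 1) ≤ Λ.card * d := Nat.mul_le_mul_left _ (Nat.sub_le _ _)
    omega
  obtain ⟨b, hb⟩ : ∃ b : ZMod p, b ∉ B := by
    by_contra h
    push_neg at h
    have : (Finset.univ : Finset (ZMod p)) ⊆ B := fun x _ => h x
    have := Finset.card_le_card this
    rw [Finset.card_univ, ZMod.card] at this
    omega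
  have hb0 : b ≠ 0 := fun h => hb (h ▸ Finset.mem_insert_self 0 _)
  refine ⟨b.val, ?_, ZMod.val_lt b, ?_⟩
  · have : b.val ≠ 0 := fun h => hb0 ((ZMod.val_eq_zero b).mp h)
    omega
  · intro mm hmem hmm0 hdvd
    have heval : (F mm).eval b = 0 := by
      have h0 : ((∑ j, mm j * (b.val : ℤ) ^ (j : ℕ) : ℤ) : ZMod p) = 0 :=
        (ZMod.intCast_zmod_eq_zero_iff_dvd _ _).mpr hdvd
      push_cast at h0
      simpa [hF, Polynomial.eval_finset_sum, ZMod.natCast_val, ZMod.cast_id] using h0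
    have : b ∈ Λ.biUnion fun mm => (F mm).roots.toFinset := by
      refine Finset.mem_biUnion.mpr ⟨mm, hmem, ?_⟩
      rw [Multiset.mem_toFinset, Polynomial.mem_roots (hne mm hmem hmm0)]
      exact heval
    exact hb (Finset.mem_insert_of_mem this)

end
end

section
/- Let d ∈ ℕ, let p be a prime, let Λ ⊂ ℤ^d be a finite set, and let a be a natural number with 1 ≤ a < p such that for every nonzero m ∈ Λ one has m₁ + a·m₂ + ⋯ + a^{d−1}·m_d ≢ 0 (mod p). Define points ξ^ν = (ξ^ν₁, …, ξ^ν_d) ∈ 𝕋^d by ξ^ν_j := 2π·{ν·a^{j−1}/p} for ν = 1, …, p, where {x} denotes the fractional part of x. Then for every trigonometric polynomial t ∈ 𝒯(Λ) one has (1/p)·∑_{ν=1}^p t(ξ^ν) = (2π)^{-d}·∫_{𝕋^d} t(x) dx. -/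
/-!
Integrating term by term, `∫_{𝕋^d} e^{i(k,x)} dx = (2π)^d δ_{k,0}`. At the nodes the fractional
parts only shift the phase by multiples of `2π`, so `e^{i(k,ξ^ν)} = ζ^{ν S(k)}` with `ζ = e^{2πi/p}`
and `S(k) = ∑_j k_j a^j`; averaging over `ν = 1, …, p` gives `1` if `p ∣ S(k)` and `0` otherwise.
The hypothesis on `a` says that on `Λ` this happens only for `k = 0`, so both sides reduce to the
coefficient of `k = 0`.
-/

open MeasureTheory Real Finset

noncomputable section

theorem sum_Icc_pow_of_pow_eq_one {K : Type*} [Field K] [DecidableEq K] {z : K} {n : ℕ}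
    (hz : z ^ n = 1) : ∑ ν ∈ Icc 1 n, z ^ ν = if z = 1 then (n : K) else 0 := by
  split_ifs with h1
  · simp [h1]
  · rw [← Ico_add_one_right_eq_Icc, sum_Ico_eq_sum_range, Nat.add_sub_cancel]
    simp only [pow_add, pow_one, ← mul_sum, geom_sum_eq h1, hz, sub_self, zero_div, mul_zero]

theorem integral_Ico_exp_int_mul_I (m : ℤ) :
    ∫ x in Set.Ico (0 : ℝ) (2 * π), Complex.exp (Complex.I * m * x) =
      if m = 0 then ((2 * π : ℝ) : ℂ) else 0 := by
  split_ifs with hm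
  · simp [hm, Real.two_pi_pos.le]
  · rw [setIntegral_congr_set Ico_ae_eq_Ioc, ← intervalIntegral.integral_of_le Real.two_pi_pos.le,
      integral_exp_mul_complex (by simpa using hm)]
    have : Complex.I * m * ((2 * π : ℝ) : ℂ) = m * (2 * π * Complex.I) := by push_cast; ring
    rw [this, Complex.exp_int_mul_two_pi_mul_I]
    simp

theorem integral_torusCube_exp (d : ℕ) (k : Fin d → ℤ) :
    ∫ x in torusCube d, Complex.exp (Complex.I * ∑ j, (k j : ℂ) * (x j : ℂ)) =
      if k = 0 then (((2 * π) ^ d : ℝ) : ℂ) else 0 := by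
  have hprod : ∀ x : Fin d → ℝ, Complex.exp (Complex.I * ∑ j, (k j : ℂ) * (x j : ℂ)) =
      ∏ j, Complex.exp (Complex.I * k j * x j) := by
    intro x
    rw [mul_sum, Complex.exp_sum]
    simp only [mul_assoc]
  simp only [torusCube, volume_pi, Measure.restrict_pi_pi, hprod]
  rw [integral_fintype_prod_eq_prod (fun j (x : ℝ) => Complex.exp (Complex.I * k j * x))]
  simp only [integral_Ico_exp_int_mul_I]
  split_ifs with hk
  · simp [hk]
  · obtain ⟨j, hj⟩ := Function.ne_iff.mp hk
    exact prod_eq_zero (mem_univ j) (if_neg hj)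

theorem exp_inner_xiPoint (d p a : ℕ) (hp : p ≠ 0) (k : Fin d → ℤ) (ν : ℕ) :
    Complex.exp (Complex.I * ∑ j, (k j : ℂ) * (xiPoint d p a ν j : ℂ)) =
      Complex.exp (2 * π * Complex.I / p) ^ ((∑ j, k j * (a : ℤ) ^ (j : ℕ)) * ν) := by
  set N : ℤ := ∑ j, k j * ⌊(ν * a ^ (j : ℕ) : ℝ) / p⌋
  have hexp : Complex.I * ∑ j, (k j : ℂ) * (xiPoint d p a ν j : ℂ) =
      (((∑ j, k j * (a : ℤ) ^ (j : ℕ)) * ν : ℤ) : ℂ) * (2 * π * Complex.I / p) +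
        ((-N : ℤ) : ℂ) * (2 * π * Complex.I) := by
    simp only [xiPoint, Int.fract, N]
    push_cast
    rw [neg_mul, ← sub_eq_add_neg]
    simp only [sum_mul, mul_sum, ← sum_sub_distrib]
    refine sum_congr rfl fun j _ => ?_
    field_simp
  rw [hexp, Complex.exp_add, Complex.exp_int_mul_two_pi_mul_I, mul_one, Complex.exp_int_mul]

theorem sum_exp_inner_xiPoint (d p a : ℕ) (hp : p ≠ 0) (k : Fin d → ℤ) :
    ∑ ν ∈ Icc 1 p, Complex.exp (Complex.I * ∑ j, (k j : ℂ) * (xiPoint d p a ν j : ℂ)) =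
      if (p : ℤ) ∣ ∑ j, k j * (a : ℤ) ^ (j : ℕ) then (p : ℂ) else 0 := by
  have hζ := Complex.isPrimitiveRoot_exp p hp
  simp only [exp_inner_xiPoint d p a hp, zpow_mul, zpow_natCast]
  rw [sum_Icc_pow_of_pow_eq_one]
  · simp only [hζ.zpow_eq_one_iff_dvd]
  · rw [← zpow_natCast, ← zpow_mul, hζ.zpow_eq_one_iff_dvd]
    exact dvd_mul_left _ _

theorem integral_torusCube_trigSum (d : ℕ) (Λ : Finset (Fin d → ℤ)) (c : (Fin d → ℤ) → ℂ) :
    ∫ x in torusCube d, trigSum Λ c x =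
      ∑ k ∈ Λ, c k * if k = 0 then (((2 * π) ^ d : ℝ) : ℂ) else 0 := by
  have hcube : IsCompact (Set.univ.pi fun _ : Fin d => Set.Icc (0 : ℝ) (2 * π)) :=
    isCompact_univ_pi fun _ => isCompact_Icc
  have hint : ∀ k ∈ Λ, IntegrableOn
      (fun x : Fin d → ℝ => c k * Complex.exp (Complex.I * ∑ j, (k j : ℂ) * (x j : ℂ)))
      (torusCube d) := fun k _ =>
    ((by fun_prop : Continuous _).continuousOn.integrableOn_compact hcube).mono_set
      (Set.pi_mono fun _ _ => Set.Ico_subset_Icc_self)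
  simp only [trigSum, integral_finsetSum Λ hint, integral_const_mul, integral_torusCube_exp]

theorem sum_trigSum_xiPoint (d p a : ℕ) (hp : p ≠ 0) (Λ : Finset (Fin d → ℤ))
    (c : (Fin d → ℤ) → ℂ) :
    ∑ ν ∈ Icc 1 p, trigSum Λ c (xiPoint d p a ν) =
      ∑ k ∈ Λ, c k * if (p : ℤ) ∣ ∑ j, k j * (a : ℤ) ^ (j : ℕ) then (p : ℂ) else 0 := by
  simp only [trigSum]
  rw [sum_comm]
  simp only [← mul_sum, sum_exp_inner_xiPoint d p a hp]

theorem stmt9_general (d : ℕ) (p : ℕ) (hp : p.Prime) (Λ : Finset (Fin d → ℤ))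
    (a : ℕ)
    (ha : ∀ mm ∈ Λ, mm ≠ 0 → ¬ ((p : ℤ) ∣ ∑ j, mm j * (a : ℤ) ^ (j : ℕ))) :
    ∀ c : (Fin d → ℤ) → ℂ,
      (1 / (p : ℂ)) * ∑ ν ∈ Finset.Icc 1 p, trigSum Λ c (xiPoint d p a ν) =
        ((((2 * π) ^ d)⁻¹ : ℝ) : ℂ) * ∫ x in torusCube d, trigSum Λ c x := by
  intro c
  rw [sum_trigSum_xiPoint d p a hp.ne_zero, integral_torusCube_trigSum, mul_sum, mul_sum]
  refine sum_congr rfl fun k hk => ?_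
  rcases eq_or_ne k 0 with rfl | hk0
  · have hp0 : (p : ℂ) ≠ 0 := by exact_mod_cast hp.ne_zero
    have hvol : (2 * (π : ℂ)) ^ d ≠ 0 := by exact_mod_cast (by positivity : (2 * π) ^ d ≠ 0)
    simp only [Pi.zero_apply, zero_mul, sum_const_zero, dvd_zero, if_true]
    push_cast
    field_simp
  · simp [ha k hk hk0, hk0]

theorem stmt9 (d : ℕ) (hd : 0 < d) (p : ℕ) (hp : p.Prime) (Λ : Finset (Fin d → ℤ))
    (a : ℕ) (ha1 : 1 ≤ a) (hap : a < p)
    (ha : ∀ mm ∈ Λ, mm ≠ 0 → ¬ ((p : ℤ) ∣ ∑ j, mm j * (a : ℤ) ^ (j : ℕ))) :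
    ∀ c : (Fin d → ℤ) → ℂ,
      (1 / (p : ℂ)) * ∑ ν ∈ Finset.Icc 1 p, trigSum Λ c (xiPoint d p a ν) =
        ((((2 * π) ^ d)⁻¹ : ℝ) : ℂ) * ∫ x in torusCube d, trigSum Λ c x :=
  stmt9_general d p hp Λ a ha

end
end

section
/- Let Q ⊂ ℤ^d be a finite set and let Λ(Q) := {m − k : m ∈ Q, k ∈ Q}. Let p be a prime and a a natural number with 1 ≤ a < p such that for every nonzero m ∈ Λ(Q) one has m₁ + a·m₂ + ⋯ + a^{d−1}·m_d ≢ 0 (mod p). Define ξ^ν ∈ 𝕋^d by ξ^ν_j := 2π·{ν·a^{j−1}/p} for ν = 1, …, p. Then for every t ∈ 𝒯(Q) and every x ∈ 𝕋^d one has (1/p)·∑_{ν=1}^p t(ξ^ν)·𝒟_Q(x − ξ^ν) = t(x). -/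
/-!
With `ω = exp (2πi/p)` and `κ(n) = ∑ⱼ nⱼ aʲ`, the character `e^{i(n,x)}` takes the value
`(ω ^ κ(n)) ^ ν` at the lattice point `ξ^ν`, so averaging it over `ν = 1, …, p` gives `1` if
`p ∣ κ(n)` and `0` otherwise. Expanding `t(ξ^ν) 𝒟_Q(x - ξ^ν)` produces the characters of the
differences `k - m ∈ Λ(Q)` at `ξ^ν`; by hypothesis only `k = m` survives the average, which
leaves `t(x)`.
-/

open MeasureTheory Real Finset

noncomputable section

/-- `Λ(Q) = {m - k : m ∈ Q, k ∈ Q}`. -/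
def diffSet {d : ℕ} (Q : Finset (Fin d → ℤ)) : Finset (Fin d → ℤ) :=
  (Q ×ˢ Q).image fun z => z.1 - z.2

theorem sum_Icc_one_pow_eq_zero {R : Type*} [CommRing R] [IsDomain R] {ζ : R} {p : ℕ}
    (hζp : ζ ^ p = 1) (hζ : ζ ≠ 1) : ∑ ν ∈ Icc 1 p, ζ ^ ν = 0 := by
  have hgeom : ∑ i ∈ range p, ζ ^ i = 0 := by
    have h := geom_sum_mul ζ p
    rw [hζp, sub_self, mul_eq_zero] at h
    exact h.resolve_right (sub_ne_zero.mpr hζ)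
  rw [← Ico_add_one_right_eq_Icc, sum_Ico_eq_sum_range, add_tsub_cancel_right]
  simp only [pow_add, pow_one, ← mul_sum, hgeom, mul_zero]

def torusChar {d : ℕ} (k : Fin d → ℤ) (x : Fin d → ℝ) : ℂ :=
  Complex.exp (Complex.I * ∑ j, (k j : ℂ) * (x j : ℂ))

theorem trigSum_eq_sum_torusChar {d : ℕ} (Q : Finset (Fin d → ℤ)) (c : (Fin d → ℤ) → ℂ)
    (x : Fin d → ℝ) : trigSum Q c x = ∑ k ∈ Q, c k * torusChar k x := rfl

theorem dirKernel_eq_sum_torusChar {d : ℕ} (Q : Finset (Fin d → ℤ)) (x : Fin d → ℝ) :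
    dirKernel Q x = ∑ k ∈ Q, torusChar k x := rfl

theorem torusChar_mul_torusChar_sub {d : ℕ} (k m : Fin d → ℤ) (x y : Fin d → ℝ) :
    torusChar k y * torusChar m (x - y) = torusChar m x * torusChar (k - m) y := by
  simp only [torusChar, ← Complex.exp_add, ← mul_add, ← sum_add_distrib, Pi.sub_apply]
  push_cast
  exact congrArg _ (congrArg _ (sum_congr rfl fun j _ => by ring))

theorem torusChar_xiPoint {d p : ℕ} (a ν : ℕ) (n : Fin d → ℤ) :
    torusChar n (xiPoint d p a ν) =
      (Complex.exp (2 * π * Complex.I / p) ^ ∑ j, n j * (a : ℤ) ^ (j : ℕ)) ^ ν := by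
  rw [← zpow_natCast, ← zpow_mul, ← Complex.exp_int_mul, torusChar,
    Complex.exp_eq_exp_iff_exists_int]
  refine ⟨-∑ j, n j * ⌊((ν * a ^ (j : ℕ) : ℝ) / p)⌋, ?_⟩
  simp only [xiPoint, Int.fract]
  push_cast
  simp only [mul_sum, sum_mul, ← sum_neg_distrib, ← sum_add_distrib]
  refine sum_congr rfl fun j _ => ?_
  field_simp
  ring

theorem sum_torusChar_xiPoint {d p : ℕ} (hp : p ≠ 0) (a : ℕ) (n : Fin d → ℤ) :
    ∑ ν ∈ Icc 1 p, torusChar n (xiPoint d p a ν) =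
      if (p : ℤ) ∣ ∑ j, n j * (a : ℤ) ^ (j : ℕ) then (p : ℂ) else 0 := by
  have hω := Complex.isPrimitiveRoot_exp p hp
  have hroot := hω.zpow_eq_one_iff_dvd (∑ j, n j * (a : ℤ) ^ (j : ℕ))
  rw [sum_congr rfl fun ν _ => torusChar_xiPoint a ν n]
  by_cases hS : (p : ℤ) ∣ ∑ j, n j * (a : ℤ) ^ (j : ℕ)
  · rw [if_pos hS, hroot.mpr hS]
    simp
  · rw [if_neg hS]
    refine sum_Icc_one_pow_eq_zero ?_ (mt hroot.mp hS)
    rw [← zpow_natCast, ← zpow_mul, mul_comm _ (p : ℤ), zpow_mul, zpow_natCast, hω.pow_eq_one,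
      one_zpow]

theorem sum_trigSum_mul_dirKernel_sub {d : ℕ} {ι : Type*} (s : Finset ι) (ξ : ι → Fin d → ℝ)
    (Q : Finset (Fin d → ℤ)) (c : (Fin d → ℤ) → ℂ) (x : Fin d → ℝ) :
    ∑ ν ∈ s, trigSum Q c (ξ ν) * dirKernel Q (x - ξ ν) =
      ∑ k ∈ Q, ∑ m ∈ Q, c k * torusChar m x * ∑ ν ∈ s, torusChar (k - m) (ξ ν) := by
  simp only [trigSum_eq_sum_torusChar, dirKernel_eq_sum_torusChar, sum_mul_sum]
  simp only [mul_sum]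
  rw [sum_comm]
  refine sum_congr rfl fun k _ => ?_
  rw [sum_comm]
  refine sum_congr rfl fun m _ => sum_congr rfl fun ν _ => ?_
  rw [mul_assoc, mul_assoc, torusChar_mul_torusChar_sub]

theorem stmt10_general (d : ℕ) (Q : Finset (Fin d → ℤ)) (p : ℕ) (hp : p.Prime) (a : ℕ)
    (ha : ∀ mm ∈ diffSet Q, mm ≠ 0 → ¬ ((p : ℤ) ∣ ∑ j, mm j * (a : ℤ) ^ (j : ℕ))) :
    ∀ (c : (Fin d → ℤ) → ℂ) (x : Fin d → ℝ),
      (1 / (p : ℂ)) * ∑ ν ∈ Finset.Icc 1 p,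
          trigSum Q c (xiPoint d p a ν) * dirKernel Q (x - xiPoint d p a ν) =
        trigSum Q c x := by
  intro c x
  have hp0 : (p : ℂ) ≠ 0 := Nat.cast_ne_zero.mpr hp.ne_zero
  have horth : ∀ k ∈ Q, ∀ m ∈ Q,
      ∑ ν ∈ Icc 1 p, torusChar (k - m) (xiPoint d p a ν) = if m = k then (p : ℂ) else 0 := by
    intro k hk m hm
    rw [sum_torusChar_xiPoint hp.ne_zero]
    by_cases hmk : m = k
    · simp [hmk]
    · have hdiff : k - m ∈ diffSet Q := mem_image.mpr ⟨(k, m), mem_product.mpr ⟨hk, hm⟩, rfl⟩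
      rw [if_neg (ha _ hdiff (sub_ne_zero.mpr (Ne.symm hmk))), if_neg hmk]
  rw [sum_trigSum_mul_dirKernel_sub, trigSum_eq_sum_torusChar, mul_sum]
  refine sum_congr rfl fun k hk => ?_
  rw [sum_congr rfl fun m hm => by rw [horth k hk m hm]]
  simp only [mul_ite, mul_zero, sum_ite_eq', if_pos hk]
  field_simp

theorem stmt10 (d : ℕ) (hd : 0 < d) (Q : Finset (Fin d → ℤ)) (p : ℕ) (hp : p.Prime)
    (a : ℕ) (ha1 : 1 ≤ a) (hap : a < p)
    (ha : ∀ mm ∈ diffSet Q, mm ≠ 0 → ¬ ((p : ℤ) ∣ ∑ j, mm j * (a : ℤ) ^ (j : ℕ))) :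
    ∀ (c : (Fin d → ℤ) → ℂ) (x : Fin d → ℝ),
      (1 / (p : ℂ)) * ∑ ν ∈ Finset.Icc 1 p,
          trigSum Q c (xiPoint d p a ν) * dirKernel Q (x - xiPoint d p a ν) =
        trigSum Q c x :=
  stmt10_general d Q p hp a ha

end
end

section
/- Let Q ⊂ ℤ^d be a finite set and let Λ(Q) := {m − k : m ∈ Q, k ∈ Q}. Let p be a prime and a a natural number with 1 ≤ a < p such that for every nonzero m ∈ Λ(Q) one has m₁ + a·m₂ + ⋯ + a^{d−1}·m_d ≢ 0 (mod p). Define ξ^ν ∈ 𝕋^d by ξ^ν_j := 2π·{ν·a^{j−1}/p} for ν = 1, …, p. Then for every vector b = (b₁, …, b_p) ∈ ℂ^p the polynomial T(b)(x) := (1/p)·∑_{ν=1}^p b_ν·𝒟_Q(x − ξ^ν) satisfies ‖T(b)‖₂ ≤ ((1/p)·∑_{ν=1}^p |b_ν|²)^{1/2}. -/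
open MeasureTheory Real Finset

noncomputable section

/-!
Expanding each Dirichlet kernel in Fourier modes, `T(b) = ∑_{k ∈ Q} c_k e^{i(k,x)}` with
`c_k = p⁻¹ F(k₁ + a k₂ + ⋯ + a^{d-1} k_d mod p)`, where `F` is the discrete Fourier transform
of `b` on `ℤ/p`: the coordinates of `ξ^ν` differ from `2π ν a^{j-1} / p` by multiples of `2π`.
Parseval on the torus gives `‖T(b)‖₂² = ∑_{k ∈ Q} |c_k|²`. The hypothesis on `Λ(Q)` says exactly
that `k ↦ k₁ + a k₂ + ⋯ mod p` is injective on `Q`, so this is at most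
`p⁻² ∑_{r ∈ ℤ/p} |F r|²`, which equals `p⁻¹ ∑_ν |b_ν|²` by Parseval on `ℤ/p`.
-/

open ComplexConjugate

theorem norm_sq_sum_mul {ι : Type*} (s : Finset ι) (c e : ι → ℂ) :
    (‖∑ k ∈ s, c k * e k‖ : ℂ) ^ 2 =
      ∑ k ∈ s, ∑ m ∈ s, c k * conj (c m) * (e k * conj (e m)) := by
  rw [← Complex.mul_conj', map_sum, sum_mul_sum]
  refine sum_congr rfl fun k _ => sum_congr rfl fun m _ => ?_
  rw [map_mul]; ring

theorem sum_sum_mul_conj_mul_ite {ι : Type*} [DecidableEq ι] (s : Finset ι) (c : ι → ℂ) (C : ℂ) :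
    ∑ k ∈ s, ∑ m ∈ s, c k * conj (c m) * (if k = m then C else 0) =
      C * ∑ k ∈ s, (‖c k‖ : ℂ) ^ 2 := by
  simp only [mul_ite, mul_zero, sum_ite_eq, mul_sum]
  exact sum_congr rfl fun k hk => by rw [if_pos hk, Complex.mul_conj', mul_comm]

theorem sum_norm_sq_sum_mulShift {R ι : Type*} [CommRing R] [Fintype R] [DecidableEq R]
    [DecidableEq ι] {ψ : AddChar R ℂ} (hψ : ψ.IsPrimitive) {s : Finset ι} {g : ι → R}
    (hg : Set.InjOn g s) (b : ι → ℂ) :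
    ∑ r : R, ‖∑ ν ∈ s, b ν * ψ (g ν * r)‖ ^ 2 = Fintype.card R * ∑ ν ∈ s, ‖b ν‖ ^ 2 := by
  have horth : ∀ ν ∈ s, ∀ μ ∈ s,
      ∑ r : R, ψ (g ν * r) * conj (ψ (g μ * r)) = if ν = μ then (Fintype.card R : ℂ) else 0 := by
    intro ν hν μ hμ
    simp_rw [← AddChar.map_neg_eq_conj, ← AddChar.map_add_eq_mul, ← neg_mul, ← add_mul,
      mul_comm _ (_ : R), AddChar.sum_mulShift _ hψ, add_neg_eq_zero, hg.eq_iff hν hμ,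
      Nat.cast_ite, Nat.cast_zero]
  apply Complex.ofReal_injective
  push_cast
  simp_rw [norm_sq_sum_mul]
  rw [sum_comm, ← sum_sum_mul_conj_mul_ite s b (Fintype.card R)]
  refine sum_congr rfl fun ν hν => ?_
  rw [sum_comm]
  refine sum_congr rfl fun μ hμ => ?_
  rw [← mul_sum, horth ν hν μ hμ]

def fourierMode {d : ℕ} (k : Fin d → ℤ) (x : Fin d → ℝ) : ℂ :=
  Complex.exp (Complex.I * ∑ j, (k j : ℂ) * (x j : ℂ))

theorem trigSum_eq_sum_fourierMode {d : ℕ} (Q : Finset (Fin d → ℤ)) (c : (Fin d → ℤ) → ℂ)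
    (x : Fin d → ℝ) : trigSum Q c x = ∑ k ∈ Q, c k * fourierMode k x := rfl

theorem dirKernel_eq_sum_fourierMode {d : ℕ} (Q : Finset (Fin d → ℤ)) (x : Fin d → ℝ) :
    dirKernel Q x = ∑ k ∈ Q, fourierMode k x := rfl

theorem continuous_fourierMode {d : ℕ} (k : Fin d → ℤ) : Continuous (fourierMode k) := by
  unfold fourierMode; fun_prop

theorem fourierMode_eq_prod {d : ℕ} (k : Fin d → ℤ) (x : Fin d → ℝ) :
    fourierMode k x = ∏ j, Complex.exp (Complex.I * k j * x j) := by
  simp only [fourierMode, mul_sum, Complex.exp_sum, mul_assoc]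

theorem fourierMode_mul_conj {d : ℕ} (k m : Fin d → ℤ) (x : Fin d → ℝ) :
    fourierMode k x * conj (fourierMode m x) = fourierMode (k - m) x := by
  simp only [fourierMode, ← Complex.exp_conj, ← Complex.exp_add, map_mul, map_sum,
    Complex.conj_I, map_intCast, Complex.conj_ofReal, Pi.sub_apply, Int.cast_sub, sub_mul,
    sum_sub_distrib]
  ring_nf

theorem fourierMode_sub {d : ℕ} (k : Fin d → ℤ) (x y : Fin d → ℝ) :
    fourierMode k (x - y) = fourierMode k x * conj (fourierMode k y) := by
  simp only [fourierMode, ← Complex.exp_conj, ← Complex.exp_add, map_mul, map_sum,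
    Complex.conj_I, map_intCast, Complex.conj_ofReal, Pi.sub_apply, Complex.ofReal_sub, mul_sub,
    sum_sub_distrib]
  ring_nf

theorem Continuous.integrableOn_torusCube {d : ℕ} {f : (Fin d → ℝ) → ℂ} (hf : Continuous f) :
    IntegrableOn f (torusCube d) :=
  (hf.continuousOn.integrableOn_compact (isCompact_univ_pi fun _ => isCompact_Icc)).mono_set
    (Set.pi_mono fun _ _ => Set.Ico_subset_Icc_self)

theorem setIntegral_torusCube_prod {d : ℕ} (f : Fin d → ℝ → ℂ) :
    ∫ x in torusCube d, ∏ j, f j (x j) = ∏ j, ∫ t in Set.Ico 0 (2 * π), f j t := by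
  have hpi : volume.restrict (torusCube d) =
      Measure.pi fun _ : Fin d => volume.restrict (Set.Ico 0 (2 * π)) := by
    refine (Measure.pi_eq fun s hs => ?_).symm
    rw [Measure.restrict_apply (MeasurableSet.univ_pi hs), torusCube, ← Set.pi_inter_distrib,
      volume_pi_pi]
    exact prod_congr rfl fun i _ => (Measure.restrict_apply (hs i)).symm
  rw [hpi]
  exact integral_fintype_prod_eq_prod (μ := fun _ => volume.restrict (Set.Ico 0 (2 * π))) f

theorem setIntegral_Ico_exp_int_mul (n : ℤ) :
    ∫ t in Set.Ico 0 (2 * π), Complex.exp (Complex.I * n * t) =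
      if n = 0 then (2 * π : ℂ) else 0 := by
  rw [integral_Ico_eq_integral_Ioo, ← integral_Ioc_eq_integral_Ioo,
    ← intervalIntegral.integral_of_le (by positivity)]
  split_ifs with hn
  · simp [hn]
  · have hIn : Complex.I * n ≠ 0 := by simp [hn]
    have hperiod : Complex.exp (Complex.I * n * (2 * π)) = 1 := by
      rw [show Complex.I * n * (2 * π) = n * (2 * π * Complex.I) by ring]
      exact Complex.exp_int_mul_two_pi_mul_I n
    simp [integral_exp_mul_complex hIn, hperiod]

theorem setIntegral_torusCube_fourierMode {d : ℕ} (n : Fin d → ℤ) :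
    ∫ x in torusCube d, fourierMode n x = if n = 0 then ((2 * π) ^ d : ℂ) else 0 := by
  simp_rw [fourierMode_eq_prod]
  rw [setIntegral_torusCube_prod fun j t => Complex.exp (Complex.I * n j * t)]
  simp_rw [setIntegral_Ico_exp_int_mul]
  split_ifs with hn
  · simp [hn]
  · obtain ⟨j, hj⟩ := Function.ne_iff.mp hn
    exact prod_eq_zero (mem_univ j) (if_neg hj)

theorem lqNormPow_two_trigSum {d : ℕ} (Q : Finset (Fin d → ℤ)) (c : (Fin d → ℤ) → ℂ) :
    lqNormPow d 2 (trigSum Q c) = ∑ k ∈ Q, ‖c k‖ ^ 2 := by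
  have hint : ∀ k m : Fin d → ℤ, IntegrableOn
      (fun x => c k * conj (c m) * fourierMode (k - m) x) (torusCube d) := fun k m =>
    (continuous_const.mul (continuous_fourierMode _)).integrableOn_torusCube
  have hsq : ((∫ x in torusCube d, ‖trigSum Q c x‖ ^ (2 : ℝ) : ℝ) : ℂ) =
      (2 * π) ^ d * ∑ k ∈ Q, (‖c k‖ : ℂ) ^ 2 := by
    rw [← integral_complex_ofReal]
    simp_rw [Real.rpow_two, Complex.ofReal_pow, trigSum_eq_sum_fourierMode, norm_sq_sum_mul,
      fourierMode_mul_conj]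
    rw [integral_finsetSum _ fun k _ => integrable_finsetSum _ fun m _ => hint k m,
      ← sum_sum_mul_conj_mul_ite]
    refine sum_congr rfl fun k _ => ?_
    rw [integral_finsetSum _ fun m _ => hint k m]
    refine sum_congr rfl fun m _ => ?_
    simp only [integral_const_mul, setIntegral_torusCube_fourierMode, sub_eq_zero]
  have hsq' : ∫ x in torusCube d, ‖trigSum Q c x‖ ^ (2 : ℝ) = (2 * π) ^ d * ∑ k ∈ Q, ‖c k‖ ^ 2 :=
    Complex.ofReal_injective (by rw [hsq]; push_cast; rfl)
  rw [lqNormPow, hsq', inv_mul_cancel_left₀ (by positivity)]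

theorem const_mul_sum_dirKernel_sub {d : ℕ} {ι : Type*} (Q : Finset (Fin d → ℤ)) (C : ℂ)
    (S : Finset ι) (b : ι → ℂ) (y : ι → Fin d → ℝ) :
    (fun x => C * ∑ ν ∈ S, b ν * dirKernel Q (x - y ν)) =
      trigSum Q fun k => C * ∑ ν ∈ S, b ν * conj (fourierMode k (y ν)) := by
  ext x
  simp only [trigSum_eq_sum_fourierMode, dirKernel_eq_sum_fourierMode, fourierMode_sub, mul_sum,
    sum_mul]
  rw [sum_comm]
  exact sum_congr rfl fun k _ => sum_congr rfl fun ν _ => by ring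

theorem injOn_natCast_Icc (p : ℕ) : Set.InjOn (fun ν : ℕ => (ν : ZMod p)) (Icc 1 p) := by
  intro μ hμ ν hν hμν
  simp only [coe_Icc, Set.mem_Icc] at hμ hν
  refine Nat.ModEq.eq_of_abs_lt ((ZMod.natCast_eq_natCast_iff _ _ _).mp hμν) ?_
  rw [abs_lt]
  constructor <;> omega

def korobovDot {d : ℕ} (a : ℕ) (k : Fin d → ℤ) : ℤ := ∑ j, k j * (a : ℤ) ^ (j : ℕ)

theorem korobovDot_sub {d : ℕ} (a : ℕ) (k m : Fin d → ℤ) :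
    korobovDot a (k - m) = korobovDot a k - korobovDot a m := by
  simp only [korobovDot, Pi.sub_apply, sub_mul, sum_sub_distrib]

theorem injOn_korobovDot {d : ℕ} {Q : Finset (Fin d → ℤ)} {p a : ℕ}
    (ha : ∀ m ∈ diffSet Q, m ≠ 0 → ¬ (p : ℤ) ∣ korobovDot a m) :
    Set.InjOn (fun k => (korobovDot a k : ZMod p)) (Q : Set (Fin d → ℤ)) := by
  intro k hk m hm hkm
  by_contra hne
  have hdiff : k - m ∈ diffSet Q := mem_image.mpr ⟨(k, m), mem_product.mpr ⟨hk, hm⟩, rfl⟩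
  refine ha (k - m) hdiff (sub_ne_zero.mpr hne) ?_
  rw [korobovDot_sub]
  exact (ZMod.intCast_eq_intCast_iff_dvd_sub _ _ _).mp hkm.symm

theorem fourierMode_xiPoint {d : ℕ} (p a ν : ℕ) [NeZero p] (k : Fin d → ℤ) :
    fourierMode k (xiPoint d p a ν) =
      ZMod.stdAddChar ((ν : ZMod p) * (korobovDot a k : ZMod p)) := by
  rw [show (ν : ZMod p) * (korobovDot a k : ZMod p) = ((ν * korobovDot a k : ℤ) : ZMod p) by
      push_cast; rfl,
    ZMod.stdAddChar_coe, fourierMode, Complex.exp_eq_exp_iff_exists_int]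
  refine ⟨-∑ j, k j * ⌊(ν * a ^ (j : ℕ) : ℝ) / p⌋, ?_⟩
  simp only [xiPoint, ← Int.self_sub_floor, korobovDot]
  push_cast
  simp only [mul_sum, sum_div, sum_mul, ← sum_neg_distrib, ← sum_add_distrib]
  exact sum_congr rfl fun j _ => by ring

theorem stmt11_general (d : ℕ) (Q : Finset (Fin d → ℤ)) (p : ℕ) (hp : p.Prime) (a : ℕ)
    (ha : ∀ mm ∈ diffSet Q, mm ≠ 0 → ¬ ((p : ℤ) ∣ ∑ j, mm j * (a : ℤ) ^ (j : ℕ))) :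
    ∀ b : ℕ → ℂ,
      Real.sqrt (lqNormPow d 2 (fun x =>
          (1 / (p : ℂ)) * ∑ ν ∈ Finset.Icc 1 p, b ν * dirKernel Q (x - xiPoint d p a ν))) ≤
        Real.sqrt ((1 / p) * ∑ ν ∈ Finset.Icc 1 p, ‖b ν‖ ^ 2) := by
  intro b
  have : NeZero p := ⟨hp.ne_zero⟩
  set F : ZMod p → ℂ := fun r => ∑ ν ∈ Icc 1 p, b ν * ZMod.stdAddChar (-(ν : ZMod p) * r)
  have hcoeff : ∀ k, ∑ ν ∈ Icc 1 p, b ν * conj (fourierMode k (xiPoint d p a ν)) =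
      F (korobovDot a k) := fun k => sum_congr rfl fun ν _ => by
    rw [fourierMode_xiPoint, ← AddChar.map_neg_eq_conj, neg_mul]
  have hParseval : ∑ r, ‖F r‖ ^ 2 = p * ∑ ν ∈ Icc 1 p, ‖b ν‖ ^ 2 := by
    simpa only [ZMod.card, Function.comp_apply] using sum_norm_sq_sum_mulShift
      (ZMod.isPrimitive_stdAddChar p) (neg_injective.comp_injOn (injOn_natCast_Icc p)) b
  rw [const_mul_sum_dirKernel_sub, lqNormPow_two_trigSum]
  refine Real.sqrt_le_sqrt ?_
  calc ∑ k ∈ Q, ‖1 / (p : ℂ) * ∑ ν ∈ Icc 1 p, b ν * conj (fourierMode k (xiPoint d p a ν))‖ ^ 2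
      = (1 / p) ^ 2 * ∑ r ∈ Q.image fun k => (korobovDot a k : ZMod p), ‖F r‖ ^ 2 := by
        rw [sum_image (injOn_korobovDot ha), mul_sum]
        simp [hcoeff, mul_pow]
    _ ≤ (1 / p) ^ 2 * ∑ r, ‖F r‖ ^ 2 := by
        gcongr
        exact subset_univ _
    _ = (1 / p) * ∑ ν ∈ Icc 1 p, ‖b ν‖ ^ 2 := by
        rw [hParseval]
        field_simp

theorem stmt11 (d : ℕ) (hd : 0 < d) (Q : Finset (Fin d → ℤ)) (p : ℕ) (hp : p.Prime)
    (a : ℕ) (ha1 : 1 ≤ a) (hap : a < p)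
    (ha : ∀ mm ∈ diffSet Q, mm ≠ 0 → ¬ ((p : ℤ) ∣ ∑ j, mm j * (a : ℤ) ^ (j : ℕ))) :
    ∀ b : ℕ → ℂ,
      Real.sqrt (lqNormPow d 2 (fun x =>
          (1 / (p : ℂ)) * ∑ ν ∈ Finset.Icc 1 p, b ν * dirKernel Q (x - xiPoint d p a ν))) ≤
        Real.sqrt ((1 / p) * ∑ ν ∈ Finset.Icc 1 p, ‖b ν‖ ^ 2) :=
  stmt11_general d Q p hp a ha

end
end
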